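/- arXiv:2310.07808 — 3 statements merged into one kernel-verified Lean document; each statement's English description precedes it below -/
import Mathlib

section
/- Let a < b be real numbers, let N ≥ 1 be an integer, and let f : [a,b] → ℝ be N times continuously differentiable on [a,b]. Let x_1, …, x_N be the roots of the degree-N Chebyshev polynomial shifted to [a,b], namely x_i = (a+b)/2 + ((b−a)/2)·cos((2i−1)π/(2N)) for i = 1, …, N, and let P be the unique polynomial of degree at most N−1 satisfying P(x_i) = f(x_i) for all i. Then for every ζ ∈ [a,b], |f(ζ) − P(ζ)| ≤ ((b−a)^N / (N! · 2^{2N−1})) · sup_{ξ∈[a,b]} |f^{(N)}(ξ)|. -/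
/-!
Off the nodes, choose `c` so that `g = f - P - c ω`, with `ω = ∏ (X - xᵢ)`, vanishes at `ζ` as well
as at the `N` nodes. Applying Rolle's theorem `N` times gives `ξ` with `g⁽ᴺ⁾(ξ) = 0`, that is
`f⁽ᴺ⁾(ξ) = c N!`, whence `f(ζ) - P(ζ) = f⁽ᴺ⁾(ξ) / N! · ω(ζ)`. For the Chebyshev nodes, `ω` is
`((b - a) / 2)ᴺ 2¹⁻ᴺ` times `T_N` composed with the affine map `[a, b] → [-1, 1]`, and `|T_N| ≤ 1`
there.
-/

open Polynomial Polynomial.Chebyshev Real Set Finset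

theorem exists_finset_derivWithin_eq_zero {g : ℝ → ℝ} {a b : ℝ}
    (hg : ContinuousOn g (Icc a b)) {S : Finset ℝ} (hS : ↑S ⊆ Icc a b)
    (hz : ∀ y ∈ S, g y = 0) :
    ∃ T : Finset ℝ, #S ≤ #T + 1 ∧ ↑T ⊆ Icc a b ∧ ∀ y ∈ T, derivWithin g (Icc a b) y = 0 := by
  have rolle : ∀ p ∈ S ×ˢ S, p.1 < p.2 → ∃ c ∈ Ioo p.1 p.2, deriv g c = 0 := by
    rintro ⟨y, z⟩ hp hyz
    rw [mem_product] at hp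
    exact exists_deriv_eq_zero hyz
      (hg.mono (Icc_subset_Icc (hS hp.1).1 (hS hp.2).2)) ((hz y hp.1).trans (hz z hp.2).symm)
  choose! c hc hc0 using rolle
  have hcI : ∀ p ∈ S ×ˢ S, p.1 < p.2 → c p ∈ Ioo a b := fun p hp hlt =>
    have hp' := mem_product.1 hp
    ⟨(hS hp'.1).1.trans_lt (hc p hp hlt).1, (hc p hp hlt).2.trans_le (hS hp'.2).2⟩
  refine ⟨{p ∈ S ×ˢ S | p.1 < p.2}.image c, ?_, ?_, ?_⟩
  · refine card_le_of_interleaved fun y hy z hz hyz _ => ⟨c (y, z), ?_, hc (y, z) ?_ hyz⟩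
    · exact mem_image_of_mem c (mem_filter.2 ⟨mem_product.2 ⟨hy, hz⟩, hyz⟩)
    · exact mem_product.2 ⟨hy, hz⟩
  · intro y hy
    obtain ⟨p, hp, rfl⟩ := mem_image.1 hy
    exact Ioo_subset_Icc_self (hcI p (mem_filter.1 hp).1 (mem_filter.1 hp).2)
  · intro y hy
    obtain ⟨p, hp, rfl⟩ := mem_image.1 hy
    obtain ⟨hp, hlt⟩ := mem_filter.1 hp
    rw [derivWithin_of_mem_nhds (Icc_mem_nhds (hcI p hp hlt).1 (hcI p hp hlt).2), hc0 p hp hlt]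

theorem exists_iteratedDerivWithin_eq_zero {a b : ℝ} (hab : a < b) {n : ℕ} {g : ℝ → ℝ}
    (hg : ContDiffOn ℝ n g (Icc a b)) {S : Finset ℝ} (hS : n < #S) (hSab : ↑S ⊆ Icc a b)
    (hz : ∀ y ∈ S, g y = 0) :
    ∃ ξ ∈ Icc a b, iteratedDerivWithin n g (Icc a b) ξ = 0 := by
  induction n generalizing g S with
  | zero =>
    obtain ⟨y, hy⟩ := card_pos.1 hS
    exact ⟨y, hSab hy, by simpa using hz y hy⟩
  | succ n ih =>
    obtain ⟨T, hST, hTab, hT⟩ := exists_finset_derivWithin_eq_zero hg.continuousOn hSab hz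
    have hg' : ContDiffOn ℝ n (derivWithin g (Icc a b)) (Icc a b) :=
      hg.derivWithin (uniqueDiffOn_Icc hab) (by push_cast; rfl)
    obtain ⟨ξ, hξ, hξ0⟩ := ih hg' (by omega) hTab hT
    exact ⟨ξ, hξ, by rwa [iteratedDerivWithin_succ']⟩

theorem Polynomial.iteratedDeriv_eval {𝕜 : Type*} [NontriviallyNormedField 𝕜] (n : ℕ)
    (p : 𝕜[X]) :
    iteratedDeriv n (fun x => p.eval x) = fun x => (derivative^[n] p).eval x := by
  induction n generalizing p with
  | zero => simp
  | succ n ih =>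
    have hderiv : deriv (fun x => p.eval x) = fun x => p.derivative.eval x := by
      ext; exact p.deriv
    rw [iteratedDeriv_succ', hderiv, ih, Function.iterate_succ_apply]

theorem Polynomial.contDiff_eval {𝕜 : Type*} [NontriviallyNormedField 𝕜] (p : 𝕜[X])
    (n : WithTop ℕ∞) :
    ContDiff 𝕜 n (fun x => p.eval x) := by
  simpa using p.contDiff_aeval (𝕜 := 𝕜) n

theorem Polynomial.iteratedDerivWithin_eval {𝕜 : Type*} [NontriviallyNormedField 𝕜] {s : Set 𝕜}
    (hs : UniqueDiffOn 𝕜 s) {x : 𝕜} (hx : x ∈ s) (n : ℕ) (p : 𝕜[X]) :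
    iteratedDerivWithin n (fun x => p.eval x) s x = (derivative^[n] p).eval x := by
  rw [iteratedDerivWithin_eq_iteratedDeriv hs (p.contDiff_eval n).contDiffAt hx,
    iteratedDeriv_eval]

theorem Polynomial.iterate_derivative_natDegree {R : Type*} [CommSemiring R] (p : R[X]) :
    derivative^[p.natDegree] p = C (p.natDegree.factorial * p.leadingCoeff) := by
  rw [eq_C_of_natDegree_eq_zero (Nat.eq_zero_of_le_zero
    ((natDegree_iterate_derivative p _).trans_eq (Nat.sub_self _))), coeff_iterate_derivative,
    zero_add, Nat.descFactorial_self, nsmul_eq_mul, leadingCoeff]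

theorem Polynomial.iterate_derivative_add_C_mul_nodal {ι : Type*} {s : Finset ι} {v : ι → ℝ}
    {n : ℕ} (hs : #s = n) {P : ℝ[X]} (hP : P.degree < n) (c : ℝ) :
    derivative^[n] (P + C c * Lagrange.nodal s v) = C (c * n.factorial) := by
  have h := (Lagrange.nodal s v).iterate_derivative_natDegree
  rw [Lagrange.natDegree_nodal, (Lagrange.nodal_monic).leadingCoeff, hs, mul_one] at h
  rw [iterate_map_add, iterate_derivative_eq_zero_of_degree_lt hP, iterate_derivative_C_mul, h,
    zero_add, ← C_mul]

theorem exists_sub_eval_eq_iteratedDerivWithin_mul_eval_nodal {a b : ℝ} (hab : a < b) {n : ℕ}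
    {f : ℝ → ℝ} (hf : ContDiffOn ℝ n f (Icc a b)) {ι : Type*} {s : Finset ι} (hs : #s = n)
    {v : ι → ℝ} (hv : InjOn v s) (hvab : ∀ i ∈ s, v i ∈ Icc a b) {P : ℝ[X]} (hP : P.degree < n)
    (hPf : ∀ i ∈ s, P.eval (v i) = f (v i)) {ζ : ℝ} (hζ : ζ ∈ Icc a b) :
    ∃ ξ ∈ Icc a b, f ζ - P.eval ζ =
      iteratedDerivWithin n f (Icc a b) ξ / n.factorial * (Lagrange.nodal s v).eval ζ := by
  by_cases! hζv : ∃ i ∈ s, ζ = v i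
  · obtain ⟨i, hi, rfl⟩ := hζv
    exact ⟨v i, hvab i hi, by rw [hPf i hi, sub_self, Lagrange.eval_nodal_at_node hi, mul_zero]⟩
  set W := Lagrange.nodal s v
  have hW : W.eval ζ ≠ 0 := Lagrange.eval_nodal_not_at_node hζv
  set c := (f ζ - P.eval ζ) / W.eval ζ
  set Q := P + C c * W
  have hQ : ContDiff ℝ n fun y => Q.eval y := Q.contDiff_eval n
  have hζS : ζ ∉ s.image v := fun h => by
    obtain ⟨i, hi, hiζ⟩ := mem_image.1 h
    exact hζv i hi hiζ.symm
  obtain ⟨ξ, hξ, hξ0⟩ := exists_iteratedDerivWithin_eq_zero hab (g := f - fun y => Q.eval y)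
    (hf.sub hQ.contDiffOn)
    (S := insert ζ (s.image v))
    (by rw [card_insert_of_notMem hζS, card_image_of_injOn hv, hs]; omega)
    (by
      rw [coe_insert, coe_image, Set.insert_subset_iff, Set.image_subset_iff]
      exact ⟨hζ, hvab⟩)
    (by
      simp only [Finset.mem_insert, Finset.mem_image]
      rintro y (rfl | ⟨i, hi, rfl⟩)
      · simp only [Pi.sub_apply, Q, eval_add, eval_mul, eval_C, c, div_mul_cancel₀ _ hW]
        ring
      · simp [Q, W, hPf i hi, Lagrange.eval_nodal_at_node hi])
  have hfξ : iteratedDerivWithin n f (Icc a b) ξ = c * n.factorial := by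
    rw [iteratedDerivWithin_sub hξ (uniqueDiffOn_Icc hab) (hf ξ hξ) hQ.contDiffWithinAt,
      Q.iteratedDerivWithin_eval (uniqueDiffOn_Icc hab) hξ,
      iterate_derivative_add_C_mul_nodal hs hP, eval_C, sub_eq_zero] at hξ0
    exact hξ0
  refine ⟨ξ, hξ, ?_⟩
  rw [hfξ, mul_div_cancel_right₀ _ (by positivity), div_mul_cancel₀ _ hW]

-- The roots of `T ℝ n`, indexed from `0` as in `roots_T_real`: the node `xᵢ` of the statement is
-- `shiftedChebyshevNode a b N (i - 1)`.
noncomputable def chebyshevNode (n k : ℕ) : ℝ := cos ((2 * k + 1) * π / (2 * n))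

theorem injOn_chebyshevNode (n : ℕ) : InjOn (chebyshevNode n) ↑(Finset.range n) :=
  (range n).nodup_map_iff_injOn.1 (roots_T_real_nodup n)

theorem eval_T_real_eq_prod_sub_chebyshevNode (n : ℕ) (u : ℝ) :
    (T ℝ n).eval u = 2 ^ (n - 1) * ∏ k ∈ range n, (u - chebyshevNode n k) := by
  have hroots_eq : (T ℝ n).roots = ((range n).image (chebyshevNode n)).val := roots_T_real n
  have hroots : Multiset.card (T ℝ n).roots = (T ℝ n).natDegree := by
    rw [hroots_eq, natDegree_T, Int.natAbs_natCast, ← Finset.card_def,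
      card_image_of_injOn (injOn_chebyshevNode n), card_range]
  conv_lhs => rw [← C_leadingCoeff_mul_prod_multiset_X_sub_C hroots]
  rw [hroots_eq, leadingCoeff_T, Int.natAbs_natCast, eval_mul, eval_C, eval_multiset_prod,
    Multiset.map_map, ← Finset.prod_eq_multiset_prod, prod_image (injOn_chebyshevNode n)]
  simp

theorem abs_prod_sub_chebyshevNode_le {n : ℕ} {u : ℝ} (hu : |u| ≤ 1) :
    |∏ k ∈ range n, (u - chebyshevNode n k)| ≤ (2 ^ (n - 1))⁻¹ := by
  have hT := abs_eval_T_real_le_one n hu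
  rw [eval_T_real_eq_prod_sub_chebyshevNode, abs_mul,
    abs_of_pos (by positivity : (0 : ℝ) < 2 ^ (n - 1))] at hT
  rwa [inv_eq_one_div, le_div_iff₀' (by positivity)]

noncomputable def shiftedChebyshevNode (a b : ℝ) (n k : ℕ) : ℝ :=
  (a + b) / 2 + (b - a) / 2 * chebyshevNode n k

theorem shiftedChebyshevNode_mem_Icc {a b : ℝ} (hab : a ≤ b) (n k : ℕ) :
    shiftedChebyshevNode a b n k ∈ Icc a b := by
  have h1 := neg_one_le_cos ((2 * k + 1) * π / (2 * n))
  have h2 := cos_le_one ((2 * k + 1) * π / (2 * n))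
  unfold shiftedChebyshevNode chebyshevNode
  constructor <;> nlinarith

theorem injOn_shiftedChebyshevNode {a b : ℝ} (hab : a < b) (n : ℕ) :
    InjOn (shiftedChebyshevNode a b n) ↑(Finset.range n) := by
  intro k hk l hl hkl
  refine injOn_chebyshevNode n hk hl ?_
  have : (b - a) / 2 ≠ 0 := by linarith
  simpa [shiftedChebyshevNode, this] using hkl

theorem abs_prod_sub_shiftedChebyshevNode_le {a b : ℝ} (hab : a < b) (n : ℕ) {y : ℝ}
    (hy : y ∈ Icc a b) :
    |∏ k ∈ range n, (y - shiftedChebyshevNode a b n k)| ≤ (b - a) ^ n / 2 ^ (2 * n - 1) := by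
  set r := (b - a) / 2 with hr_def
  have hr : 0 < r := by linarith
  set u := (y - (a + b) / 2) / r with hu_def
  have hu : |u| ≤ 1 := by
    rw [abs_le, le_div_iff₀ hr, div_le_iff₀ hr]; constructor <;> linarith [hy.1, hy.2]
  have hsub : ∀ k, y - shiftedChebyshevNode a b n k = r * (u - chebyshevNode n k) := by
    intro k; rw [shiftedChebyshevNode, hu_def, mul_sub, mul_div_cancel₀ _ hr.ne']; ring
  simp_rw [hsub]
  rw [prod_mul_distrib, prod_const, card_range, abs_mul, abs_pow, abs_of_pos hr]
  calc r ^ n * |∏ k ∈ range n, (u - chebyshevNode n k)| ≤ r ^ n * (2 ^ (n - 1))⁻¹ := by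
        gcongr; exact abs_prod_sub_chebyshevNode_le hu
    _ = (b - a) ^ n / 2 ^ (2 * n - 1) := by
        rw [show 2 * n - 1 = n + (n - 1) by omega, pow_add, div_pow]; field_simp

/-- Chebyshev-node interpolation error bound (Lemma 7.1 of the paper):
if `f` is `N` times continuously differentiable on `[a,b]` and `P` is the
polynomial of degree at most `N-1` interpolating `f` at the roots of the
degree-`N` Chebyshev polynomial shifted to `[a,b]`, then
`|f ζ - P ζ| ≤ (b-a)^N / (N! 2^(2N-1)) · sup_{ξ∈[a,b]} |f^{(N)} ξ|`. -/
theorem chebyshev_interpolation_error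
    (a b : ℝ) (hab : a < b) (N : ℕ) (hN : 1 ≤ N)
    (f : ℝ → ℝ) (hf : ContDiffOn ℝ N f (Set.Icc a b))
    (x : ℕ → ℝ)
    (hx : ∀ i ∈ Finset.Icc 1 N,
      x i = (a + b) / 2 + ((b - a) / 2) * Real.cos ((2 * (i : ℝ) - 1) * Real.pi / (2 * N)))
    (P : Polynomial ℝ) (hPdeg : P.natDegree ≤ N - 1)
    (hPinterp : ∀ i ∈ Finset.Icc 1 N, P.eval (x i) = f (x i)) :
    ∀ ζ ∈ Set.Icc a b,
      |f ζ - P.eval ζ| ≤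
        (b - a) ^ N / (N.factorial * 2 ^ (2 * N - 1)) *
          sSup ((fun ξ => |iteratedDerivWithin N f (Set.Icc a b) ξ|) '' Set.Icc a b) := by
  intro ζ hζ
  have hIcc : ∀ k ∈ range N, k + 1 ∈ Finset.Icc 1 N := fun k hk =>
    Finset.mem_Icc.2 ⟨by omega, Finset.mem_range.1 hk⟩
  have hnode : ∀ k ∈ range N, x (k + 1) = shiftedChebyshevNode a b N k := fun k hk => by
    rw [hx (k + 1) (hIcc k hk), shiftedChebyshevNode, chebyshevNode]
    push_cast
    ring_nf
  have hP : P.degree < N :=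
    (degree_le_of_natDegree_le hPdeg).trans_lt (by exact_mod_cast Nat.sub_one_lt_of_lt hN)
  obtain ⟨ξ, hξ, herr⟩ := exists_sub_eval_eq_iteratedDerivWithin_mul_eval_nodal hab hf
    (card_range N) (injOn_shiftedChebyshevNode hab N)
    (fun k _ => shiftedChebyshevNode_mem_Icc hab.le N k) hP
    (fun k hk => hnode k hk ▸ hPinterp (k + 1) (hIcc k hk)) hζ
  have hbdd : BddAbove ((fun ξ => |iteratedDerivWithin N f (Icc a b) ξ|) '' Icc a b) :=
    isCompact_Icc.bddAbove_image
      (hf.continuousOn_iteratedDerivWithin le_rfl (uniqueDiffOn_Icc hab)).abs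
  have hM := le_csSup hbdd (mem_image_of_mem _ hξ)
  rw [herr, Lagrange.eval_nodal, abs_mul, abs_div, Nat.abs_cast]
  calc _ ≤ sSup ((fun ξ => |iteratedDerivWithin N f (Icc a b) ξ|) '' Icc a b) / N.factorial *
          ((b - a) ^ N / 2 ^ (2 * N - 1)) := by
        have hM0 := (abs_nonneg _).trans hM
        gcongr
        exact abs_prod_sub_shiftedChebyshevNode_le hab N hζ
    _ = _ := by ring
end

section
/- Let N ≥ 1 be an integer and let f : [0,1] → ℝ be N times continuously differentiable with sup_{ξ∈[0,1]} |f^{(N)}(ξ)| ≤ M̃ for some real number M̃. Then there exists a polynomial p of degree at most N−1 such that (∫_0^1 (f(ζ) − p(ζ))² dζ)^{1/2} ≤ M̃ / (N! · 2^{2N−1}). -/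
/-!
Interpolate `f` at the Chebyshev nodes of `[0,1]`, the images of the zeros of `T_N` under
`r ↦ (1 + r) / 2`. Applying the generalized Rolle theorem to `f` minus the interpolant corrected
by a multiple of the nodal polynomial `ω` shows that the error at `x` is `f⁽ᴺ⁾(ξ) / N! · ω(x)`,
and `ω(x) = T_N(2x - 1) / 2^(2N-1)` is at most `2^(1-2N)` in absolute value on `[0,1]`.
A uniform bound on an interval of length one bounds the `L²` norm.
-/

open Polynomial Set

namespace Polynomial

theorem iterate_derivative_of_natDegree_le {R : Type*} [Semiring R] {p : R[X]} {n : ℕ}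
    (hp : p.natDegree ≤ n) : derivative^[n] p = C ((n.factorial : R) * p.coeff n) := by
  ext m
  rw [coeff_iterate_derivative, coeff_C, nsmul_eq_mul]
  rcases Nat.eq_zero_or_pos m with rfl | hm
  · simp [Nat.descFactorial_self]
  · simp [coeff_eq_zero_of_natDegree_lt (show p.natDegree < m + n by omega), hm.ne']

variable {𝕜 : Type*} [NontriviallyNormedField 𝕜]

theorem contDiff_eval_s1 (p : 𝕜[X]) (n : WithTop ℕ∞) : ContDiff 𝕜 n fun x => p.eval x :=
  contDiff_aeval p n

theorem iteratedDeriv_eval_s1 (p : 𝕜[X]) (n : ℕ) :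
    iteratedDeriv n (fun x => p.eval x) = fun x => (derivative^[n] p).eval x := by
  induction n generalizing p with
  | zero => simp
  | succ n ih =>
    have hderiv : _root_.deriv (fun x => p.eval x) = fun x => (derivative p).eval x := by
      ext; exact p.deriv
    rw [iteratedDeriv_succ', hderiv, ih, Function.iterate_succ_apply]

theorem iteratedDerivWithin_eval_s1 (p : 𝕜[X]) (n : ℕ) {s : Set 𝕜} (hs : UniqueDiffOn 𝕜 s)
    {x : 𝕜} (hx : x ∈ s) :
    iteratedDerivWithin n (fun x => p.eval x) s x = (derivative^[n] p).eval x := by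
  rw [iteratedDerivWithin_eq_iteratedDeriv hs (p.contDiff_eval_s1 n).contDiffAt hx,
    iteratedDeriv_eval_s1]

end Polynomial

theorem exists_iteratedDerivWithin_eq_zero_of_strictMono {a b : ℝ} (hab : a < b) {n : ℕ}
    {f : ℝ → ℝ} (hf : ContDiffOn ℝ n f (Icc a b)) {z : Fin (n + 1) → ℝ} (hz : StrictMono z)
    (hz_mem : ∀ i, z i ∈ Icc a b) (hfz : ∀ i, f (z i) = 0) :
    ∃ ξ ∈ Icc a b, iteratedDerivWithin n f (Icc a b) ξ = 0 := by
  induction n generalizing f with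
  | zero => exact ⟨z 0, hz_mem 0, by simpa using hfz 0⟩
  | succ n ih =>
    have hzi_mem (i : Fin (n + 1)) : Icc (z i.castSucc) (z i.succ) ⊆ Icc a b :=
      Icc_subset_Icc (hz_mem _).1 (hz_mem _).2
    have hrolle (i : Fin (n + 1)) :
        ∃ c ∈ Ioo (z i.castSucc) (z i.succ), derivWithin f (Icc a b) c = 0 := by
      obtain ⟨c, hc, hc0⟩ := exists_deriv_eq_zero (hz Fin.castSucc_lt_succ)
        (hf.continuousOn.mono (hzi_mem i)) ((hfz _).trans (hfz _).symm)
      refine ⟨c, hc, ?_⟩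
      rwa [derivWithin_of_mem_nhds (Icc_mem_nhds _ _)]
      · exact (hz_mem _).1.trans_lt hc.1
      · exact hc.2.trans_le (hz_mem _).2
    choose c hc hc0 using hrolle
    have hc_mono : StrictMono c := fun i j hij =>
      (hc i).2.trans_le <| (hz.monotone (Fin.succ_le_castSucc_iff.mpr hij)).trans (hc j).1.le
    obtain ⟨ξ, hξ, hξ0⟩ := ih (hf.derivWithin (uniqueDiffOn_Icc hab) (by norm_cast))
      hc_mono (fun i => hzi_mem i (Ioo_subset_Icc_self (hc i))) hc0
    exact ⟨ξ, hξ, by rwa [iteratedDerivWithin_succ']⟩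

theorem exists_iteratedDerivWithin_eq_zero_of_card_zeros {a b : ℝ} (hab : a < b) {n : ℕ}
    {f : ℝ → ℝ} (hf : ContDiffOn ℝ n f (Icc a b)) {Z : Finset ℝ} (hZ : Z.card = n + 1)
    (hZ_sub : ↑Z ⊆ Icc a b) (hfZ : ∀ z ∈ Z, f z = 0) :
    ∃ ξ ∈ Icc a b, iteratedDerivWithin n f (Icc a b) ξ = 0 :=
  exists_iteratedDerivWithin_eq_zero_of_strictMono hab hf
    (fun _ _ hij => (Z.orderIsoOfFin hZ).strictMono hij)
    (fun i => hZ_sub (Z.orderIsoOfFin hZ i).2) (fun i => hfZ _ (Z.orderIsoOfFin hZ i).2)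

theorem sqrt_integral_sq_le_of_abs_le {g : ℝ → ℝ} {a b B : ℝ} (hab : a ≤ b)
    (hg : ∀ x ∈ Icc a b, |g x| ≤ B) :
    √(∫ x in a..b, g x ^ 2) ≤ B * √(b - a) := by
  have hB : 0 ≤ B := (abs_nonneg _).trans (hg a (left_mem_Icc.mpr hab))
  by_cases hint : IntervalIntegrable (fun x => g x ^ 2) MeasureTheory.volume a b
  · have : ∫ x in a..b, g x ^ 2 ≤ B ^ 2 * (b - a) := by
      simpa [mul_comm] using intervalIntegral.integral_mono_on hab hint intervalIntegrable_const
        fun x hx => sq_le_sq' (abs_le.mp (hg x hx)).1 (abs_le.mp (hg x hx)).2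
    calc √(∫ x in a..b, g x ^ 2) ≤ √(B ^ 2 * (b - a)) := Real.sqrt_le_sqrt this
      _ = B * √(b - a) := by rw [Real.sqrt_mul (sq_nonneg B), Real.sqrt_sq hB]
  · rw [intervalIntegral.integral_undef hint, Real.sqrt_zero]
    positivity

namespace Lagrange

open Finset in
theorem exists_sub_eval_interpolate_eq_mul_eval_nodal {ι : Type*} [DecidableEq ι] {a b : ℝ}
    (hab : a < b) {s : Finset ι} {v : ι → ℝ} (hv : InjOn v s) (hv_mem : ∀ i ∈ s, v i ∈ Icc a b)
    {f : ℝ → ℝ} (hf : ContDiffOn ℝ #s f (Icc a b)) {x : ℝ} (hx : x ∈ Icc a b) :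
    ∃ ξ ∈ Icc a b, f x - (interpolate s v fun i => f (v i)).eval x
      = iteratedDerivWithin #s f (Icc a b) ξ / (#s).factorial * (nodal s v).eval x := by
  set p := interpolate s v fun i => f (v i)
  have hp_node {i} (hi : i ∈ s) : p.eval (v i) = f (v i) := eval_interpolate_at_node _ hv hi
  by_cases hx_node : ∃ i ∈ s, x = v i
  · obtain ⟨i, hi, rfl⟩ := hx_node
    exact ⟨v i, hx, by simp [hp_node hi, eval_nodal_at_node hi]⟩
  push Not at hx_node
  have hω : (nodal s v).eval x ≠ 0 := eval_nodal_not_at_node hx_node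
  -- `q` interpolates `f` at the nodes and at `x`, so `f - q` has `#s + 1` zeros.
  set c := (f x - p.eval x) / (nodal s v).eval x
  set q := p + C c * nodal s v
  have hp_deg : p.degree < #s := degree_interpolate_lt _ hv
  have hq_deriv : derivative^[#s] q = C ((#s).factorial * c) := by
    have hω_deg : (C c * nodal s v).natDegree ≤ #s :=
      (natDegree_C_mul_le _ _).trans_eq natDegree_nodal
    rw [iterate_derivative_of_natDegree_le
      (natDegree_add_le_of_degree_le (natDegree_le_of_degree_le hp_deg.le) hω_deg)]
    have hω_coeff : (nodal s v).coeff #s = 1 :=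
      natDegree_nodal (v := v) ▸ nodal_monic.coeff_natDegree
    simp [coeff_eq_zero_of_degree_lt hp_deg, hω_coeff]
  have hZ : #(insert x (s.image v)) = #s + 1 := by
    rw [card_insert_of_notMem (by simpa [eq_comm] using hx_node), card_image_of_injOn hv]
  have hZ_sub : ↑(insert x (s.image v)) ⊆ Icc a b := by
    rw [coe_insert, coe_image]
    exact insert_subset hx (image_subset_iff.mpr hv_mem)
  have hZ_zero : ∀ z ∈ insert x (s.image v), f z - q.eval z = 0 := by
    simp only [Finset.mem_insert, Finset.mem_image]
    rintro z (rfl | ⟨i, hi, rfl⟩)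
    · simp [q, c, div_mul_cancel₀ _ hω]
    · simp [q, hp_node hi, eval_nodal_at_node hi]
  obtain ⟨ξ, hξ, hξ0⟩ := exists_iteratedDerivWithin_eq_zero_of_card_zeros hab
    (hf.sub (q.contDiff_eval_s1 _).contDiffOn) hZ hZ_sub hZ_zero
  refine ⟨ξ, hξ, ?_⟩
  change iteratedDerivWithin _ (f - fun y => q.eval y) _ _ = 0 at hξ0
  rw [iteratedDerivWithin_sub hξ (uniqueDiffOn_Icc hab) (hf ξ hξ)
    (q.contDiff_eval_s1 _).contDiffWithinAt, iteratedDerivWithin_eval_s1 _ _ (uniqueDiffOn_Icc hab) hξ,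
    hq_deriv, eval_C, sub_eq_zero] at hξ0
  rw [hξ0, mul_div_cancel_left₀ _ (by positivity), div_mul_cancel₀ _ hω]

end Lagrange

namespace Polynomial.Chebyshev

theorem card_roots_T_real (n : ℕ) : (T ℝ n).roots.card = n := by
  rw [roots_T_real, Finset.card_val, Finset.card_image_of_injOn, Finset.card_range]
  exact (Finset.range n).nodup_map_iff_injOn.mp (roots_T_real_nodup n)

theorem nodup_roots_T_real (n : ℕ) : (T ℝ n).roots.Nodup :=
  roots_T_real n ▸ Finset.nodup _

theorem card_toFinset_roots_T_real (n : ℕ) : (T ℝ n).roots.toFinset.card = n := by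
  rw [Multiset.toFinset_card_of_nodup (nodup_roots_T_real n), card_roots_T_real]

theorem abs_le_one_of_mem_roots_T_real {n : ℕ} {r : ℝ} (hr : r ∈ (T ℝ n).roots) : |r| ≤ 1 := by
  rcases eq_or_ne n 0 with rfl | hn
  · simp at hr
  by_contra! h
  have := one_lt_abs_eval_T_real (n := n) (by exact_mod_cast hn) h
  rw [(mem_roots (T_ne_zero _ _)).mp hr, abs_zero] at this
  norm_num at this

theorem eval_T_real_eq_prod_roots (n : ℕ) (y : ℝ) :
    (T ℝ n).eval y = 2 ^ (n - 1) * ((T ℝ n).roots.map (y - ·)).prod := by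
  have hsplit := C_leadingCoeff_mul_prod_multiset_X_sub_C (p := T ℝ n)
    (by simp [card_roots_T_real])
  conv_lhs => rw [← hsplit]
  simp [eval_multiset_prod]

end Polynomial.Chebyshev

open Polynomial.Chebyshev Lagrange

theorem Lagrange.eval_nodal_T_real_roots (n : ℕ) (x : ℝ) :
    (nodal (T ℝ n).roots.toFinset fun r => (1 + r) / 2).eval x
      = (T ℝ n).eval (2 * x - 1) / 2 ^ (2 * n - 1) := by
  have hprod : ∏ r ∈ (T ℝ n).roots.toFinset, (2 * x - 1 - r)
      = ((T ℝ n).roots.map (2 * x - 1 - ·)).prod := by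
    rw [Finset.prod_eq_multiset_prod, Multiset.toFinset_val, (nodup_roots_T_real n).dedup]
  calc (nodal (T ℝ n).roots.toFinset fun r => (1 + r) / 2).eval x
      = ∏ r ∈ (T ℝ n).roots.toFinset, (2 * x - 1 - r) / 2 := by
        rw [eval_nodal]
        exact Finset.prod_congr rfl fun r _ => by ring
    _ = (T ℝ n).eval (2 * x - 1) / 2 ^ (2 * n - 1) := by
        rw [Finset.prod_div_distrib, Finset.prod_const, card_toFinset_roots_T_real, hprod,
          eval_T_real_eq_prod_roots, show 2 * n - 1 = (n - 1) + n by omega, pow_add,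
          mul_div_mul_left _ _ (by positivity)]

theorem Lagrange.abs_eval_nodal_T_real_roots_le (n : ℕ) {x : ℝ} (hx : x ∈ Icc (0 : ℝ) 1) :
    |(nodal (T ℝ n).roots.toFinset fun r => (1 + r) / 2).eval x| ≤ 1 / 2 ^ (2 * n - 1) := by
  rw [eval_nodal_T_real_roots, abs_div, abs_of_pos (by positivity : (0 : ℝ) < 2 ^ (2 * n - 1))]
  gcongr
  exact abs_eval_T_real_le_one n (abs_le.mpr ⟨by linarith [hx.1], by linarith [hx.2]⟩)

theorem injective_one_add_div_two : Function.Injective fun r : ℝ => (1 + r) / 2 :=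
  fun r r' h => by linarith [show (1 + r) / 2 = (1 + r') / 2 from h]

noncomputable def chebyshevInterpolant (n : ℕ) (f : ℝ → ℝ) : ℝ[X] :=
  interpolate (T ℝ n).roots.toFinset (fun r => (1 + r) / 2) fun r => f ((1 + r) / 2)

theorem natDegree_chebyshevInterpolant_le (n : ℕ) (f : ℝ → ℝ) :
    (chebyshevInterpolant n f).natDegree ≤ n - 1 := by
  have hdeg := degree_interpolate_lt (s := (T ℝ n).roots.toFinset) (fun r => f ((1 + r) / 2))
    injective_one_add_div_two.injOn
  rw [card_toFinset_roots_T_real] at hdeg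
  rcases eq_or_ne (chebyshevInterpolant n f) 0 with h | h
  · simp [h]
  · have := (natDegree_lt_iff_degree_lt h).mpr hdeg
    omega

theorem abs_sub_eval_chebyshevInterpolant_le {n : ℕ} {f : ℝ → ℝ} {M : ℝ}
    (hf : ContDiffOn ℝ n f (Icc 0 1))
    (hM : ∀ ξ ∈ Icc (0 : ℝ) 1, |iteratedDerivWithin n f (Icc 0 1) ξ| ≤ M)
    {x : ℝ} (hx : x ∈ Icc (0 : ℝ) 1) :
    |f x - (chebyshevInterpolant n f).eval x| ≤ M / (n.factorial * 2 ^ (2 * n - 1)) := by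
  have hnode_mem : ∀ r ∈ (T ℝ n).roots.toFinset, (1 + r) / 2 ∈ Icc (0 : ℝ) 1 := by
    intro r hr
    have := abs_le.mp (abs_le_one_of_mem_roots_T_real (Multiset.mem_toFinset.mp hr))
    constructor <;> linarith
  obtain ⟨ξ, hξ, herr⟩ := exists_sub_eval_interpolate_eq_mul_eval_nodal zero_lt_one
    injective_one_add_div_two.injOn hnode_mem ((card_toFinset_roots_T_real n).symm ▸ hf) hx
  have hM0 : 0 ≤ M := (abs_nonneg _).trans (hM 0 (left_mem_Icc.mpr zero_le_one))
  rw [chebyshevInterpolant, herr, card_toFinset_roots_T_real, abs_mul, abs_div, Nat.abs_cast]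
  calc |iteratedDerivWithin n f (Icc 0 1) ξ| / n.factorial
        * |(nodal (T ℝ n).roots.toFinset fun r => (1 + r) / 2).eval x|
      ≤ M / n.factorial * (1 / 2 ^ (2 * n - 1)) := by
        gcongr
        exacts [hM ξ hξ, abs_eval_nodal_T_real_roots_le n hx]
    _ = M / (n.factorial * 2 ^ (2 * n - 1)) := by rw [div_mul_div_comm, mul_one]

theorem best_L2_polynomial_approx_general
    (N : ℕ) (f : ℝ → ℝ) (Mt : ℝ)
    (hf : ContDiffOn ℝ N f (Set.Icc 0 1))
    (hbound : ∀ ξ ∈ Set.Icc (0:ℝ) 1, |iteratedDerivWithin N f (Set.Icc 0 1) ξ| ≤ Mt) :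
    ∃ p : Polynomial ℝ, p.natDegree ≤ N - 1 ∧
      Real.sqrt (∫ ζ in (0:ℝ)..1, (f ζ - p.eval ζ) ^ 2)
        ≤ Mt / (N.factorial * 2 ^ (2 * N - 1)) := by
  refine ⟨chebyshevInterpolant N f, natDegree_chebyshevInterpolant_le N f, ?_⟩
  simpa using sqrt_integral_sq_le_of_abs_le zero_le_one
    fun x hx => abs_sub_eval_chebyshevInterpolant_le hf hbound hx

/-- Best `L²[0,1]` polynomial approximation bound: if `f` is `N` times continuously
differentiable on `[0,1]` with `sup_{ξ∈[0,1]} |f^{(N)} ξ| ≤ M̃`, then there is a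
polynomial `p` of degree at most `N-1` with
`(∫_0^1 (f - p)²)^{1/2} ≤ M̃ / (N! · 2^(2N-1))`. -/
theorem best_L2_polynomial_approx
    (N : ℕ) (hN : 1 ≤ N) (f : ℝ → ℝ) (Mt : ℝ)
    (hf : ContDiffOn ℝ N f (Set.Icc 0 1))
    (hbound : ∀ ξ ∈ Set.Icc (0:ℝ) 1, |iteratedDerivWithin N f (Set.Icc 0 1) ξ| ≤ Mt) :
    ∃ p : Polynomial ℝ, p.natDegree ≤ N - 1 ∧
      Real.sqrt (∫ ζ in (0:ℝ)..1, (f ζ - p.eval ζ) ^ 2)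
        ≤ Mt / (N.factorial * 2 ^ (2 * N - 1)) :=
  best_L2_polynomial_approx_general N f Mt hf hbound
end

section
/- Let L > 0 and let F : [0,1] × ℝ³ → ℝ be such that ζ ↦ F(ζ, v) is measurable for each v ∈ ℝ³, ζ ↦ F(ζ, 0, 0, 0) is integrable on [0,1], and |F(ζ, a, b, c) − F(ζ, a', b', c')| ≤ L·(|a − a'| + |b − b'| + |c − c'|) for all ζ ∈ [0,1] and all (a,b,c), (a',b',c') ∈ ℝ³. Define the cost functional J(z₁, z₂, u) = ∫_0^1 F(ζ, z₁(ζ), z₂(ζ), u(ζ)) dζ on triples of square-integrable functions on [0,1]. Let Γ be a set of such triples, let Γ_m̂ ⊆ Γ, and suppose there exists (z₁*, z₂*, u*) ∈ Γ with J(z₁*, z₂*, u*) = inf_{Γ} J, and there exists (ẑ₁, ẑ₂, û) ∈ Γ_m̂ with ‖z₁* − ẑ₁‖_{L²} ≤ M̃₁/(m̂!·2^{2m̂−1}), ‖z₂* − ẑ₂‖_{L²} ≤ M̃₂/(m̂!·2^{2m̂−1}), and ‖u* − û‖_{L²} ≤ M̃₃/(m̂!·2^{2m̂−1}) for some integer m̂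 ≥ 1 and nonnegative reals M̃₁, M̃₂, M̃₃. Then 0 ≤ inf_{Γ_m̂} J − inf_{Γ} J ≤ L·(M̃₁ + M̃₂ + M̃₃)/(m̂!·2^{2m̂−1}). -/
open MeasureTheory

/-! The minimizer `z*` gives `inf_Γ J = J z*`, and `ẑ ∈ Γ_m̂ ⊆ Γ` traps `inf_{Γ_m̂} J` in
`[J z*, J ẑ]`. The Lipschitz bound on the integrand gives
`J ẑ - J z* ≤ L (‖z₁* - ẑ₁‖_{L¹} + ‖z₂* - ẑ₂‖_{L¹} + ‖u* - û‖_{L¹})`, and on the unit interval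
each `L¹` norm is at most the corresponding `L²` norm (Cauchy–Schwarz). -/

lemma IsLeast.csInf_mem_Icc_of_subset {β : Type*} [ConditionallyCompleteLattice β]
    {S T : Set β} {a b : β} (ha : IsLeast S a) (hTS : T ⊆ S) (hb : b ∈ T) :
    sInf T ∈ Set.Icc a b :=
  ⟨le_csInf ⟨b, hb⟩ fun _ hy => ha.2 (hTS hy), csInf_le ⟨a, fun _ hy => ha.2 (hTS hy)⟩ hb⟩

lemma integral_abs_le_sqrt_integral_sq {α : Type*} [MeasurableSpace α] {μ : Measure α}
    [IsProbabilityMeasure μ] {f : α → ℝ} (hf : MemLp f 2 μ) :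
    ∫ x, |f x| ∂μ ≤ √(∫ x, f x ^ 2 ∂μ) := by
  have hvar := ProbabilityTheory.variance_nonneg |f| μ
  rw [ProbabilityTheory.variance_eq_sub hf.abs] at hvar
  simp only [Pi.pow_apply, Pi.abs_apply, sq_abs] at hvar
  exact Real.le_sqrt_of_sq_le (by linarith)

lemma continuous_of_abs_sub_le {G : ℝ → ℝ → ℝ → ℝ} {L : ℝ}
    (hG : ∀ a b c a' b' c', |G a b c - G a' b' c'| ≤ L * (|a - a'| + |b - b'| + |c - c'|)) :
    Continuous fun v : ℝ × ℝ × ℝ => G v.1 v.2.1 v.2.2 := by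
  refine continuous_iff_continuousAt.2 fun v => tendsto_iff_dist_tendsto_zero.2 ?_
  have hbound : Continuous fun w : ℝ × ℝ × ℝ =>
      L * (|w.1 - v.1| + |w.2.1 - v.2.1| + |w.2.2 - v.2.2|) := by fun_prop
  refine squeeze_zero (fun _ => dist_nonneg) (fun w => hG _ _ _ _ _ _) ?_
  simpa using hbound.tendsto v

lemma nonneg_of_abs_sub_le {G : ℝ → ℝ → ℝ → ℝ} {L : ℝ}
    (hG : ∀ a b c a' b' c', |G a b c - G a' b' c'| ≤ L * (|a - a'| + |b - b'| + |c - c'|)) :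
    0 ≤ L := by
  simpa using (abs_nonneg _).trans (hG 1 0 0 0 0 0)

def superposition {α : Type*} (F : α → ℝ → ℝ → ℝ → ℝ) (p : (α → ℝ) × (α → ℝ) × (α → ℝ))
    (ζ : α) : ℝ :=
  F ζ (p.1 ζ) (p.2.1 ζ) (p.2.2 ζ)

section Superposition

variable {α : Type*} [MeasurableSpace α] {μ : Measure α} {F : α → ℝ → ℝ → ℝ → ℝ} {L : ℝ}
  {p q : (α → ℝ) × (α → ℝ) × (α → ℝ)}

lemma aemeasurable_superposition (hmeas : ∀ a b c, Measurable fun ζ => F ζ a b c)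
    (hLip : ∀ ζ a b c a' b' c', |F ζ a b c - F ζ a' b' c'| ≤ L * (|a - a'| + |b - b'| + |c - c'|))
    (hp₁ : AEMeasurable p.1 μ) (hp₂ : AEMeasurable p.2.1 μ) (hp₃ : AEMeasurable p.2.2 μ) :
    AEMeasurable (superposition F p) μ := by
  have hF : Measurable (Function.uncurry fun (v : ℝ × ℝ × ℝ) ζ => F ζ v.1 v.2.1 v.2.2) :=
    measurable_uncurry_of_continuous_of_measurable (fun ζ => continuous_of_abs_sub_le (hLip ζ))
      fun v => hmeas v.1 v.2.1 v.2.2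
  exact hF.comp_aemeasurable ((hp₁.prodMk (hp₂.prodMk hp₃)).prodMk aemeasurable_id)

lemma integrable_superposition (hmeas : ∀ a b c, Measurable fun ζ => F ζ a b c)
    (hLip : ∀ ζ a b c a' b' c', |F ζ a b c - F ζ a' b' c'| ≤ L * (|a - a'| + |b - b'| + |c - c'|))
    (hF₀ : Integrable (fun ζ => F ζ 0 0 0) μ)
    (hp₁ : Integrable p.1 μ) (hp₂ : Integrable p.2.1 μ) (hp₃ : Integrable p.2.2 μ) :
    Integrable (superposition F p) μ := by
  refine Integrable.mono' (hF₀.abs.add (((hp₁.abs.add hp₂.abs).add hp₃.abs).const_mul L))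
    (aemeasurable_superposition hmeas hLip hp₁.aemeasurable hp₂.aemeasurable
      hp₃.aemeasurable).aestronglyMeasurable (Filter.Eventually.of_forall fun ζ => ?_)
  have h := hLip ζ (p.1 ζ) (p.2.1 ζ) (p.2.2 ζ) 0 0 0
  simp only [sub_zero] at h
  simp only [superposition, Real.norm_eq_abs, Pi.add_apply]
  linarith [abs_sub_abs_le_abs_sub (F ζ (p.1 ζ) (p.2.1 ζ) (p.2.2 ζ)) (F ζ 0 0 0)]

lemma integral_superposition_sub_le (hmeas : ∀ a b c, Measurable fun ζ => F ζ a b c)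
    (hLip : ∀ ζ a b c a' b' c', |F ζ a b c - F ζ a' b' c'| ≤ L * (|a - a'| + |b - b'| + |c - c'|))
    (hF₀ : Integrable (fun ζ => F ζ 0 0 0) μ)
    (hp₁ : Integrable p.1 μ) (hp₂ : Integrable p.2.1 μ) (hp₃ : Integrable p.2.2 μ)
    (hq₁ : Integrable q.1 μ) (hq₂ : Integrable q.2.1 μ) (hq₃ : Integrable q.2.2 μ) :
    ∫ ζ, superposition F q ζ ∂μ - ∫ ζ, superposition F p ζ ∂μ ≤
      L * (∫ ζ, |p.1 ζ - q.1 ζ| ∂μ + ∫ ζ, |p.2.1 ζ - q.2.1 ζ| ∂μ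
        + ∫ ζ, |p.2.2 ζ - q.2.2 ζ| ∂μ) := by
  have hd₁ : Integrable (fun ζ => |p.1 ζ - q.1 ζ|) μ := (hp₁.sub hq₁).abs
  have hd₂ : Integrable (fun ζ => |p.2.1 ζ - q.2.1 ζ|) μ := (hp₂.sub hq₂).abs
  have hd₃ : Integrable (fun ζ => |p.2.2 ζ - q.2.2 ζ|) μ := (hp₃.sub hq₃).abs
  calc ∫ ζ, superposition F q ζ ∂μ - ∫ ζ, superposition F p ζ ∂μ
      = ∫ ζ, (superposition F q ζ - superposition F p ζ) ∂μ :=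
        (integral_sub (integrable_superposition hmeas hLip hF₀ hq₁ hq₂ hq₃)
          (integrable_superposition hmeas hLip hF₀ hp₁ hp₂ hp₃)).symm
    _ ≤ ∫ ζ, L * (|p.1 ζ - q.1 ζ| + |p.2.1 ζ - q.2.1 ζ| + |p.2.2 ζ - q.2.2 ζ|) ∂μ := by
        refine integral_mono ((integrable_superposition hmeas hLip hF₀ hq₁ hq₂ hq₃).sub
          (integrable_superposition hmeas hLip hF₀ hp₁ hp₂ hp₃))
          (((hd₁.add hd₂).add hd₃).const_mul L) fun ζ => ?_
        have h := hLip ζ (q.1 ζ) (q.2.1 ζ) (q.2.2 ζ) (p.1 ζ) (p.2.1 ζ) (p.2.2 ζ)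
        simp only [abs_sub_comm (q.1 ζ), abs_sub_comm (q.2.1 ζ), abs_sub_comm (q.2.2 ζ)] at h
        exact (le_abs_self _).trans h
    _ = L * (∫ ζ, |p.1 ζ - q.1 ζ| ∂μ + ∫ ζ, |p.2.1 ζ - q.2.1 ζ| ∂μ
          + ∫ ζ, |p.2.2 ζ - q.2.2 ζ| ∂μ) := by
        have hd₁₂ : Integrable (fun ζ => |p.1 ζ - q.1 ζ| + |p.2.1 ζ - q.2.1 ζ|) μ := hd₁.add hd₂
        rw [integral_const_mul, integral_add hd₁₂ hd₃, integral_add hd₁ hd₂]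

lemma integral_superposition_sub_le_sqrt [IsProbabilityMeasure μ]
    (hmeas : ∀ a b c, Measurable fun ζ => F ζ a b c)
    (hLip : ∀ ζ a b c a' b' c', |F ζ a b c - F ζ a' b' c'| ≤ L * (|a - a'| + |b - b'| + |c - c'|))
    (hL : 0 ≤ L) (hF₀ : Integrable (fun ζ => F ζ 0 0 0) μ)
    (hp₁ : MemLp p.1 2 μ) (hp₂ : MemLp p.2.1 2 μ) (hp₃ : MemLp p.2.2 2 μ)
    (hq₁ : MemLp q.1 2 μ) (hq₂ : MemLp q.2.1 2 μ) (hq₃ : MemLp q.2.2 2 μ) :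
    ∫ ζ, superposition F q ζ ∂μ - ∫ ζ, superposition F p ζ ∂μ ≤
      L * (√(∫ ζ, (p.1 ζ - q.1 ζ) ^ 2 ∂μ) + √(∫ ζ, (p.2.1 ζ - q.2.1 ζ) ^ 2 ∂μ)
        + √(∫ ζ, (p.2.2 ζ - q.2.2 ζ) ^ 2 ∂μ)) := by
  refine (integral_superposition_sub_le hmeas hLip hF₀ (hp₁.integrable one_le_two)
    (hp₂.integrable one_le_two) (hp₃.integrable one_le_two) (hq₁.integrable one_le_two)
    (hq₂.integrable one_le_two) (hq₃.integrable one_le_two)).trans ?_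
  gcongr
  · exact integral_abs_le_sqrt_integral_sq (hp₁.sub hq₁)
  · exact integral_abs_le_sqrt_integral_sq (hp₂.sub hq₂)
  · exact integral_abs_le_sqrt_integral_sq (hp₃.sub hq₃)

end Superposition

lemma memLp_two_of_integrableOn_sq {α : Type*} [MeasurableSpace α] {μ : Measure α}
    {f : α → ℝ} {s t : Set α} (hf : Measurable f) (hsq : IntegrableOn (fun x => f x ^ 2) s μ)
    (hts : t ⊆ s) : MemLp f 2 (μ.restrict t) :=
  (memLp_two_iff_integrable_sq hf.aestronglyMeasurable).2 (hsq.mono_set hts)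

lemma intervalIntegral_superposition_sub_le_sqrt {F : ℝ → ℝ → ℝ → ℝ → ℝ} {L : ℝ}
    {p q : (ℝ → ℝ) × (ℝ → ℝ) × (ℝ → ℝ)}
    (hmeas : ∀ a b c, Measurable fun ζ => F ζ a b c)
    (hint : IntegrableOn (fun ζ => F ζ 0 0 0) (Set.Icc 0 1))
    (hLip : ∀ ζ ∈ Set.Icc (0:ℝ) 1, ∀ a b c a' b' c',
      |F ζ a b c - F ζ a' b' c'| ≤ L * (|a - a'| + |b - b'| + |c - c'|))
    (hp₁ : MemLp p.1 2 (volume.restrict (Set.Ioc 0 1)))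
    (hp₂ : MemLp p.2.1 2 (volume.restrict (Set.Ioc 0 1)))
    (hp₃ : MemLp p.2.2 2 (volume.restrict (Set.Ioc 0 1)))
    (hq₁ : MemLp q.1 2 (volume.restrict (Set.Ioc 0 1)))
    (hq₂ : MemLp q.2.1 2 (volume.restrict (Set.Ioc 0 1)))
    (hq₃ : MemLp q.2.2 2 (volume.restrict (Set.Ioc 0 1))) :
    (∫ ζ in (0:ℝ)..1, superposition F q ζ) - ∫ ζ in (0:ℝ)..1, superposition F p ζ ≤
      L * (√(∫ ζ in (0:ℝ)..1, (p.1 ζ - q.1 ζ) ^ 2) + √(∫ ζ in (0:ℝ)..1, (p.2.1 ζ - q.2.1 ζ) ^ 2)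
        + √(∫ ζ in (0:ℝ)..1, (p.2.2 ζ - q.2.2 ζ) ^ 2)) := by
  have : IsProbabilityMeasure (volume.restrict (Set.Ioc (0:ℝ) 1)) := ⟨by simp⟩
  -- `F` is only controlled on `[0, 1]`; clamping the time variable makes the bounds global.
  set G : ℝ → ℝ → ℝ → ℝ → ℝ := fun ζ => F (Set.projIcc 0 1 zero_le_one ζ)
  have hGF : ∀ ζ ∈ Set.Ioc (0:ℝ) 1, G ζ = F ζ := fun ζ hζ => by
    simp only [G, Set.projIcc_of_mem zero_le_one (Set.Ioc_subset_Icc_self hζ)]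
  have hGmeas : ∀ a b c, Measurable fun ζ => G ζ a b c := fun a b c =>
    (hmeas a b c).comp continuous_projIcc.measurable.subtype_val
  have hGLip : ∀ ζ a b c a' b' c',
      |G ζ a b c - G ζ a' b' c'| ≤ L * (|a - a'| + |b - b'| + |c - c'|) :=
    fun ζ => hLip _ (Set.projIcc 0 1 zero_le_one ζ).2
  have hG₀ : Integrable (fun ζ => G ζ 0 0 0) (volume.restrict (Set.Ioc 0 1)) :=
    (hint.mono_set Set.Ioc_subset_Icc_self).congr_fun (fun ζ hζ => by rw [hGF ζ hζ])
      measurableSet_Ioc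
  have hFG : ∀ r : (ℝ → ℝ) × (ℝ → ℝ) × (ℝ → ℝ),
      ∫ ζ in (0:ℝ)..1, superposition F r ζ = ∫ ζ in Set.Ioc 0 1, superposition G r ζ :=
    fun r => by
      rw [intervalIntegral.integral_of_le zero_le_one]
      exact setIntegral_congr_fun measurableSet_Ioc fun ζ hζ => by
        simp only [superposition, hGF ζ hζ]
  have hL : 0 ≤ L := nonneg_of_abs_sub_le (hLip 0 ⟨le_rfl, zero_le_one⟩)
  simp only [hFG, intervalIntegral.integral_of_le zero_le_one]
  exact integral_superposition_sub_le_sqrt hGmeas hGLip hL hG₀ hp₁ hp₂ hp₃ hq₁ hq₂ hq₃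

theorem inf_cost_error_bound_general
    (L : ℝ) (F : ℝ → ℝ → ℝ → ℝ → ℝ)
    (hmeas : ∀ a b c : ℝ, Measurable fun ζ => F ζ a b c)
    (hint : IntegrableOn (fun ζ => F ζ 0 0 0) (Set.Icc 0 1))
    (hLip : ∀ ζ ∈ Set.Icc (0:ℝ) 1, ∀ a b c a' b' c' : ℝ,
      |F ζ a b c - F ζ a' b' c'| ≤ L * (|a - a'| + |b - b'| + |c - c'|))
    (J : (ℝ → ℝ) × (ℝ → ℝ) × (ℝ → ℝ) → ℝ)
    (hJ : ∀ p, J p = ∫ ζ in (0:ℝ)..1, F ζ (p.1 ζ) (p.2.1 ζ) (p.2.2 ζ))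
    (Γ Γm : Set ((ℝ → ℝ) × (ℝ → ℝ) × (ℝ → ℝ)))
    (hsub : Γm ⊆ Γ)
    (hΓsq : ∀ p ∈ Γ,
      (Measurable p.1 ∧ Measurable p.2.1 ∧ Measurable p.2.2) ∧
      IntegrableOn (fun ζ => (p.1 ζ) ^ 2) (Set.Icc 0 1) ∧
      IntegrableOn (fun ζ => (p.2.1 ζ) ^ 2) (Set.Icc 0 1) ∧
      IntegrableOn (fun ζ => (p.2.2 ζ) ^ 2) (Set.Icc 0 1))
    (mhat : ℕ)
    (M₁ M₂ M₃ : ℝ)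
    (zs : (ℝ → ℝ) × (ℝ → ℝ) × (ℝ → ℝ)) (hzsmem : zs ∈ Γ)
    (hmin : IsLeast (J '' Γ) (J zs))
    (zh : (ℝ → ℝ) × (ℝ → ℝ) × (ℝ → ℝ)) (hzhmem : zh ∈ Γm)
    (h₁ : Real.sqrt (∫ ζ in (0:ℝ)..1, (zs.1 ζ - zh.1 ζ) ^ 2)
      ≤ M₁ / (mhat.factorial * 2 ^ (2 * mhat - 1)))
    (h₂ : Real.sqrt (∫ ζ in (0:ℝ)..1, (zs.2.1 ζ - zh.2.1 ζ) ^ 2)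
      ≤ M₂ / (mhat.factorial * 2 ^ (2 * mhat - 1)))
    (h₃ : Real.sqrt (∫ ζ in (0:ℝ)..1, (zs.2.2 ζ - zh.2.2 ζ) ^ 2)
      ≤ M₃ / (mhat.factorial * 2 ^ (2 * mhat - 1))) :
    0 ≤ sInf (J '' Γm) - sInf (J '' Γ) ∧
    sInf (J '' Γm) - sInf (J '' Γ)
      ≤ L * (M₁ + M₂ + M₃) / (mhat.factorial * 2 ^ (2 * mhat - 1)) := by
  have hL2 : ∀ p ∈ Γ, MemLp p.1 2 (volume.restrict (Set.Ioc 0 1)) ∧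
      MemLp p.2.1 2 (volume.restrict (Set.Ioc 0 1)) ∧
      MemLp p.2.2 2 (volume.restrict (Set.Ioc 0 1)) := by
    intro p hp
    obtain ⟨⟨hm₁, hm₂, hm₃⟩, hs₁, hs₂, hs₃⟩ := hΓsq p hp
    exact ⟨memLp_two_of_integrableOn_sq hm₁ hs₁ Set.Ioc_subset_Icc_self,
      memLp_two_of_integrableOn_sq hm₂ hs₂ Set.Ioc_subset_Icc_self,
      memLp_two_of_integrableOn_sq hm₃ hs₃ Set.Ioc_subset_Icc_self⟩
  obtain ⟨hzs₁, hzs₂, hzs₃⟩ := hL2 zs hzsmem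
  obtain ⟨hzh₁, hzh₂, hzh₃⟩ := hL2 zh (hsub hzhmem)
  have hgap : J zh - J zs ≤ L * (√(∫ ζ in (0:ℝ)..1, (zs.1 ζ - zh.1 ζ) ^ 2)
      + √(∫ ζ in (0:ℝ)..1, (zs.2.1 ζ - zh.2.1 ζ) ^ 2)
      + √(∫ ζ in (0:ℝ)..1, (zs.2.2 ζ - zh.2.2 ζ) ^ 2)) := by
    rw [hJ, hJ]
    exact intervalIntegral_superposition_sub_le_sqrt hmeas hint hLip hzs₁ hzs₂ hzs₃ hzh₁ hzh₂ hzh₃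
  have hL : 0 ≤ L := nonneg_of_abs_sub_le (hLip 0 ⟨le_rfl, zero_le_one⟩)
  obtain ⟨hlow, hup⟩ :=
    hmin.csInf_mem_Icc_of_subset (Set.image_mono hsub) (Set.mem_image_of_mem J hzhmem)
  rw [hmin.csInf_eq]
  refine ⟨sub_nonneg.2 hlow, ?_⟩
  calc sInf (J '' Γm) - J zs ≤ J zh - J zs := by linarith
    _ ≤ L * (M₁ / (mhat.factorial * 2 ^ (2 * mhat - 1))
          + M₂ / (mhat.factorial * 2 ^ (2 * mhat - 1))
          + M₃ / (mhat.factorial * 2 ^ (2 * mhat - 1))) := hgap.trans (by gcongr)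
    _ = L * (M₁ + M₂ + M₃) / (mhat.factorial * 2 ^ (2 * mhat - 1)) := by ring

/-- Error bound for the approximate optimal cost: with a Lipschitz integrand `F`,
cost functional `J`, admissible set `Γ`, subset `Γ_mhat ⊆ Γ`, a minimizer
`z* ∈ Γ` of `J` over `Γ`, and an element `ẑ ∈ Γ_mhat` within wavelet-approximation
distance of `z*`, one has
`0 ≤ inf_{Γ_mhat} J - inf_Γ J ≤ L (M̃₁+M̃₂+M̃₃)/(mhat! · 2^(2mhat-1))`. -/
theorem inf_cost_error_bound
    (L : ℝ) (hL : 0 < L) (F : ℝ → ℝ → ℝ → ℝ → ℝ)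
    (hmeas : ∀ a b c : ℝ, Measurable fun ζ => F ζ a b c)
    (hint : IntegrableOn (fun ζ => F ζ 0 0 0) (Set.Icc 0 1))
    (hLip : ∀ ζ ∈ Set.Icc (0:ℝ) 1, ∀ a b c a' b' c' : ℝ,
      |F ζ a b c - F ζ a' b' c'| ≤ L * (|a - a'| + |b - b'| + |c - c'|))
    (J : (ℝ → ℝ) × (ℝ → ℝ) × (ℝ → ℝ) → ℝ)
    (hJ : ∀ p, J p = ∫ ζ in (0:ℝ)..1, F ζ (p.1 ζ) (p.2.1 ζ) (p.2.2 ζ))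
    (Γ Γm : Set ((ℝ → ℝ) × (ℝ → ℝ) × (ℝ → ℝ)))
    (hsub : Γm ⊆ Γ)
    (hΓsq : ∀ p ∈ Γ,
      (Measurable p.1 ∧ Measurable p.2.1 ∧ Measurable p.2.2) ∧
      IntegrableOn (fun ζ => (p.1 ζ) ^ 2) (Set.Icc 0 1) ∧
      IntegrableOn (fun ζ => (p.2.1 ζ) ^ 2) (Set.Icc 0 1) ∧
      IntegrableOn (fun ζ => (p.2.2 ζ) ^ 2) (Set.Icc 0 1))
    (mhat : ℕ) (hmhat : 1 ≤ mhat)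
    (M₁ M₂ M₃ : ℝ) (hM₁ : 0 ≤ M₁) (hM₂ : 0 ≤ M₂) (hM₃ : 0 ≤ M₃)
    (zs : (ℝ → ℝ) × (ℝ → ℝ) × (ℝ → ℝ)) (hzsmem : zs ∈ Γ)
    (hmin : IsLeast (J '' Γ) (J zs))
    (zh : (ℝ → ℝ) × (ℝ → ℝ) × (ℝ → ℝ)) (hzhmem : zh ∈ Γm)
    (h₁ : Real.sqrt (∫ ζ in (0:ℝ)..1, (zs.1 ζ - zh.1 ζ) ^ 2)
      ≤ M₁ / (mhat.factorial * 2 ^ (2 * mhat - 1)))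
    (h₂ : Real.sqrt (∫ ζ in (0:ℝ)..1, (zs.2.1 ζ - zh.2.1 ζ) ^ 2)
      ≤ M₂ / (mhat.factorial * 2 ^ (2 * mhat - 1)))
    (h₃ : Real.sqrt (∫ ζ in (0:ℝ)..1, (zs.2.2 ζ - zh.2.2 ζ) ^ 2)
      ≤ M₃ / (mhat.factorial * 2 ^ (2 * mhat - 1))) :
    0 ≤ sInf (J '' Γm) - sInf (J '' Γ) ∧
    sInf (J '' Γm) - sInf (J '' Γ)
      ≤ L * (M₁ + M₂ + M₃) / (mhat.factorial * 2 ^ (2 * mhat - 1)) :=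
  inf_cost_error_bound_general L F hmeas hint hLip J hJ Γ Γm hsub hΓsq mhat M₁ M₂ M₃ zs hzsmem hmin
    zh hzhmem h₁ h₂ h₃
end
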